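/- arXiv:math/0407461 — 5 statements merged into one kernel-verified Lean document; each statement's English description precedes it below -/
import Mathlib

section
/- If x is a G-equivariant loop with constant angular momentum J, then J lies in the subspace E* of ℝ³ fixed by the G-representation g ↦ det(ρ(g)) det(τ(g)) ρ(g); that is, det(τ(g)) det(ρ(g)) ρ(g) J = J for every g ∈ G. -/
open Finset Matrix

private lemma cross_mulVec_adj (A : Matrix (Fin 3) (Fin 3) ℝ) (a b : Fin 3 → ℝ) :
    crossProduct (A.mulVec a) (A.mulVec b)
      = (A.adjugate)ᵀ.mulVec (crossProduct a b) := by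
  funext i
  fin_cases i <;>
    simp [cross_apply, Matrix.mulVec, Matrix.adjugate_fin_three, dotProduct,
      Fin.sum_univ_three, Matrix.transpose] <;> ring

private lemma adj_orthogonal {A : Matrix (Fin 3) (Fin 3) ℝ}
    (hA : A ∈ Matrix.orthogonalGroup (Fin 3) ℝ) :
    (A.adjugate)ᵀ = A.det • A := by
  have h1 : Aᵀ * A = 1 := by
    have := (Matrix.mem_orthogonalGroup_iff' (Fin 3) ℝ).mp hA
    simpa using this
  have h2 : A.adjugate = A.det • Aᵀ := by
    calc A.adjugate = (Aᵀ * A) * A.adjugate := by rw [h1, one_mul]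
    _ = Aᵀ * (A * A.adjugate) := by rw [mul_assoc]
    _ = A.det • Aᵀ := by rw [Matrix.mul_adjugate]; simp [Matrix.mul_smul]
  rw [h2]
  simp

private lemma cross_mulVec_orth {A : Matrix (Fin 3) (Fin 3) ℝ}
    (hA : A ∈ Matrix.orthogonalGroup (Fin 3) ℝ) (a b : Fin 3 → ℝ) :
    crossProduct (A.mulVec a) (A.mulVec b) = A.det • A.mulVec (crossProduct a b) := by
  rw [cross_mulVec_adj, adj_orthogonal hA, Matrix.smul_mulVec]

/-- If a `G`-equivariant loop has constant angular momentum `J`, then `J` lies in the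
subspace fixed by the representation `g ↦ det(ρ(g)) det(τ(g)) ρ(g)`:
`det(τ(g)) det(ρ(g)) ρ(g) J = J` for every `g ∈ G`. -/
theorem angular_momentum_in_fixed_subspace
    {G : Type*} [Group G] (n : ℕ)
    (τt : G → ℝ → ℝ) (τdet : G → ℝ) (ρ : G → Matrix (Fin 3) (Fin 3) ℝ)
    (σ : G → Equiv.Perm (Fin n)) (m : Fin n → ℝ)
    (x x' : ℝ → Fin n → (Fin 3 → ℝ))
    (hρ : ∀ g, ρ g ∈ Matrix.orthogonalGroup (Fin 3) ℝ)
    (hτdet : ∀ g, τdet g = 1 ∨ τdet g = -1)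
    (hm : ∀ g i, m (σ g i) = m i)
    (hequiv : ∀ g i t, x (τt g t) (σ g i) = (ρ g).mulVec (x t i))
    (hderiv : ∀ i t, HasDerivAt (fun s => x s i) (x' t i) t)
    (hequiv' : ∀ g i t, x' (τt g t) (σ g i) = τdet g • (ρ g).mulVec (x' t i))
    (hJconst : ∀ t s : ℝ,
      (∑ i, m i • crossProduct (x t i) (x' t i))
        = ∑ i, m i • crossProduct (x s i) (x' s i)) :
    ∀ g (t : ℝ),
      (τdet g * (ρ g).det) •
          (ρ g).mulVec (∑ i, m i • crossProduct (x t i) (x' t i))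
        = ∑ i, m i • crossProduct (x t i) (x' t i) := by
  intro g t
  have key : (∑ i, m i • crossProduct (x (τt g t) i) (x' (τt g t) i))
      = (τdet g * (ρ g).det) •
          (ρ g).mulVec (∑ i, m i • crossProduct (x t i) (x' t i)) := by
    rw [← Equiv.sum_comp (σ g) (fun i => m i • crossProduct (x (τt g t) i) (x' (τt g t) i))]
    have h : ∀ i, m (σ g i) • crossProduct (x (τt g t) (σ g i)) (x' (τt g t) (σ g i))
        = (τdet g * (ρ g).det) • (m i • (ρ g).mulVec (crossProduct (x t i) (x' t i))) := by
      intro i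
      rw [hm, hequiv, hequiv', LinearMap.map_smul, cross_mulVec_orth (hρ g),
        smul_smul, smul_smul, smul_smul]
      ring_nf
    simp only [h, ← Finset.smul_sum]
    congr 1
    simp only [← Matrix.mulVecLin_apply, map_sum, LinearMap.map_smul]
  calc (τdet g * (ρ g).det) •
          (ρ g).mulVec (∑ i, m i • crossProduct (x t i) (x' t i))
      = ∑ i, m i • crossProduct (x (τt g t) i) (x' (τt g t) i) := key.symm
    _ = ∑ i, m i • crossProduct (x t i) (x' t i) := hJconst _ _
end

section
/- Let x(t) = e^{ikt} x̄ be a planar rotating solution of period 2π with x̄ a fixed planar configuration, and let e be a unit vector in the plane. Define φ_i(t) = x_i(t/k) · e. Then the second variation of the action along the vertical variation φ equals π (I(x̄) − α U(x̄)), where I(x̄) = Σ_i m_i |x̄_i|² and U(x̄) = Σ_{i<j} m_i m_j |x̄_i − x̄_j|^{−α}. -/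
/-! With `c_i = x̄_i ē` one has `φ_i(t) = Re(e^{it} c_i)`, so `φ̇_i(t) = Re(e^{it} i c_i)` and
`φ_i − φ_j = Re(e^{it}(c_i − c_j))`, while the mutual distances stay constant along the rotation.
Everything then reduces to `∫₀^{2π} Re(e^{it} c)² dt = π |c|²`, and on each pair, with
`r = |x̄_i − x̄_j| = |c_i − c_j|`, the kernel `m_i m_j / r^{α+2}` times `r²` is `m_i m_j / r^α`. -/

open Finset Complex

lemma exp_ofReal_mul_I_mul_re (t : ℝ) (c : ℂ) :
    (exp (t * I) * c).re = c.re * Real.cos t - c.im * Real.sin t := by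
  rw [mul_re, exp_ofReal_mul_I_re, exp_ofReal_mul_I_im]; ring

lemma hasDerivAt_exp_ofReal_mul_I_mul_re (c : ℂ) (t : ℝ) :
    HasDerivAt (fun s : ℝ => (exp (s * I) * c).re) (exp (t * I) * (I * c)).re t := by
  have h : HasDerivAt (fun z : ℂ => exp (z * I) * c) (exp (t * I) * (I * c)) t := by
    simpa [mul_assoc] using (((hasDerivAt_id (t : ℂ)).mul_const I).cexp).mul_const c
  exact h.real_of_complex

lemma integral_exp_ofReal_mul_I_mul_re_sq (c : ℂ) :
    ∫ t in (0 : ℝ)..2 * Real.pi, (exp (t * I) * c).re ^ 2 = Real.pi * ‖c‖ ^ 2 := by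
  have hexpand : ∀ t : ℝ, (exp (t * I) * c).re ^ 2 =
      c.re ^ 2 * Real.cos t ^ 2 - 2 * c.re * c.im * (Real.sin t * Real.cos t)
        + c.im ^ 2 * Real.sin t ^ 2 := fun t => by
    rw [exp_ofReal_mul_I_mul_re]; ring
  simp_rw [hexpand]
  rw [intervalIntegral.integral_add ((by fun_prop : Continuous _).intervalIntegrable _ _)
      ((by fun_prop : Continuous _).intervalIntegrable _ _),
    intervalIntegral.integral_sub ((by fun_prop : Continuous _).intervalIntegrable _ _)
      ((by fun_prop : Continuous _).intervalIntegrable _ _)]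
  simp only [intervalIntegral.integral_const_mul, integral_cos_sq, integral_sin_sq,
    integral_sin_mul_cos₁, Real.sin_two_pi, Real.cos_two_pi, Real.sin_zero, Real.cos_zero,
    Complex.sq_norm, normSq_apply]
  ring

lemma integral_sum_mul_exp_ofReal_mul_I_mul_re_sq {ι : Type*} (s : Finset ι) (w : ι → ℝ)
    (v : ι → ℂ) :
    ∫ t in (0 : ℝ)..2 * Real.pi, ∑ i ∈ s, w i * (exp (t * I) * v i).re ^ 2
      = Real.pi * ∑ i ∈ s, w i * ‖v i‖ ^ 2 := by
  rw [intervalIntegral.integral_finsetSum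
    fun i _ => (by fun_prop : Continuous _).intervalIntegrable _ _, mul_sum]
  refine sum_congr rfl fun i _ => ?_
  rw [intervalIntegral.integral_const_mul, integral_exp_ofReal_mul_I_mul_re_sq]; ring

lemma div_rpow_add_two_mul_sq {d : ℝ} (hd : 0 < d) (a α : ℝ) :
    a / d ^ (α + 2) * d ^ 2 = a / d ^ α := by
  rw [Real.rpow_add hd, Real.rpow_two]
  field_simp

theorem second_variation_eq_pi_I_sub_alphaU_general
    (n : ℕ) (m : Fin n → ℝ) (α : ℝ) (k : ℤ)
    (xbar : Fin n → ℂ) (e : ℂ)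
    (hk : k ≠ 0) (he : ‖e‖ = 1)
    (hcoll : ∀ i j, i ≠ j → xbar i ≠ xbar j)
    (x : ℝ → Fin n → ℂ)
    (hx : ∀ t i, x t i = Complex.exp (Complex.I * (k : ℂ) * (t : ℂ)) * xbar i)
    (φ : Fin n → ℝ → ℝ)
    (hφ : ∀ i t, φ i t = (x (t / (k : ℝ)) i * (starRingEnd ℂ) e).re) :
    (∫ t in (0:ℝ)..(2 * Real.pi),
        ((∑ i, m i * (deriv (φ i) t) ^ 2)
          - α * ∑ i, ∑ j ∈ Finset.univ.filter (fun j => i < j),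
              m i * m j / ‖x t i - x t j‖ ^ (α + 2) * (φ i t - φ j t) ^ 2))
      = Real.pi * ((∑ i, m i * ‖xbar i‖ ^ 2)
          - α * ∑ i, ∑ j ∈ Finset.univ.filter (fun j => i < j),
              m i * m j / ‖xbar i - xbar j‖ ^ α) := by
  set c : Fin n → ℂ := fun i => xbar i * starRingEnd ℂ e
  have hφc : ∀ i, φ i = fun t : ℝ => (exp (t * I) * c i).re := fun i => funext fun t => by
    have hk' : (k : ℂ) ≠ 0 := by exact_mod_cast hk
    rw [hφ, hx, mul_assoc]; congr 3; push_cast; field_simp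
  have hdist : ∀ t i j, ‖x t i - x t j‖ = ‖xbar i - xbar j‖ := fun t i j => by
    rw [hx, hx, ← mul_sub, norm_mul, show I * k * t = ((k * t : ℝ) : ℂ) * I by push_cast; ring,
      norm_exp_ofReal_mul_I, one_mul]
  have hnorm_c : ∀ z : ℂ, ‖z * starRingEnd ℂ e‖ = ‖z‖ := by simp [he]
  simp only [hφc, (hasDerivAt_exp_ofReal_mul_I_mul_re _ _).deriv, hdist, ← sub_re, ← mul_sub,
    sum_sigma']
  rw [intervalIntegral.integral_sub ((by fun_prop : Continuous _).intervalIntegrable _ _)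
      ((by fun_prop : Continuous _).intervalIntegrable _ _),
    intervalIntegral.integral_const_mul, integral_sum_mul_exp_ofReal_mul_I_mul_re_sq,
    integral_sum_mul_exp_ofReal_mul_I_mul_re_sq]
  have hI : ∀ i, ‖I * c i‖ = ‖xbar i‖ := fun i => by rw [norm_mul, norm_I, one_mul, hnorm_c]
  have hpair : ∀ p ∈ univ.sigma fun i => univ.filter (i < ·),
      m p.1 * m p.2 / ‖xbar p.1 - xbar p.2‖ ^ (α + 2) * ‖c p.1 - c p.2‖ ^ 2
        = m p.1 * m p.2 / ‖xbar p.1 - xbar p.2‖ ^ α := by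
    rintro ⟨i, j⟩ hij
    have hlt : i < j := (mem_filter.1 (mem_sigma.1 hij).2).2
    rw [← sub_mul, hnorm_c,
      div_rpow_add_two_mul_sq (norm_pos_iff.2 (sub_ne_zero.2 (hcoll i j hlt.ne)))]
  rw [sum_congr rfl hpair]
  simp only [hI]
  ring

/-- For the rotating path `x(t) = e^{ikt} x̄` and the vertical variation
`φ_i(t) = x_i(t/k)·e` (with `e` a planar unit vector), the second variation
equals `π (I(x̄) − α U(x̄))`. -/
theorem second_variation_eq_pi_I_sub_alphaU
    (n : ℕ) (m : Fin n → ℝ) (α : ℝ) (k : ℤ)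
    (xbar : Fin n → ℂ) (e : ℂ)
    (hm : ∀ i, 0 < m i) (hα : 0 < α) (hk : k ≠ 0) (he : ‖e‖ = 1)
    (hcoll : ∀ i j, i ≠ j → xbar i ≠ xbar j)
    (x : ℝ → Fin n → ℂ)
    (hx : ∀ t i, x t i = Complex.exp (Complex.I * (k : ℂ) * (t : ℂ)) * xbar i)
    (φ : Fin n → ℝ → ℝ)
    (hφ : ∀ i t, φ i t = (x (t / (k : ℝ)) i * (starRingEnd ℂ) e).re) :
    (∫ t in (0:ℝ)..(2 * Real.pi),
        ((∑ i, m i * (deriv (φ i) t) ^ 2)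
          - α * ∑ i, ∑ j ∈ Finset.univ.filter (fun j => i < j),
              m i * m j / ‖x t i - x t j‖ ^ (α + 2) * (φ i t - φ j t) ^ 2))
      = Real.pi * ((∑ i, m i * ‖xbar i‖ ^ 2)
          - α * ∑ i, ∑ j ∈ Finset.univ.filter (fun j => i < j),
              m i * m j / ‖xbar i - xbar j‖ ^ α) :=
  second_variation_eq_pi_I_sub_alphaU_general n m α k xbar e hk he hcoll x hx φ hφ
end

section
/- For the vertical variation φ(t) = v sin t with v ∈ ℝ^n satisfying Σ m_i v_i = 0 and Σ m_i = 1, and a planar rotating central-configuration path x(t) = e^{ikt} x̄ with constant mutual distances, the second variation of the action equals π [ Σ_{i<j} m_i m_j (v_i − v_j)² − α Σ_{i<j} (m_i m_j/|x̄_i − x̄_j|^{α+2})(v_i − v_j)² ]. In particular, if Σ_{i<j} m_i m_j (v_i − v_j)² (1 − α |x̄_i − x̄_j|^{−(α+2)}) < 0 then x is not a local minimizer. -/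
open Finset Real

/- Rotation preserves the mutual distances, so the potential coefficients in the integrand are
constant in `t`; the integrand is then `A cos² t - α C sin² t` with constants `A`, `C`, and both
`cos²` and `sin²` integrate to `π` over a period. -/

lemma integral_mul_cos_sq_sub_mul_sin_sq (a b : ℝ) :
    ∫ t in (0:ℝ)..2 * π, (a * cos t ^ 2 - b * sin t ^ 2) = π * (a - b) := by
  rw [intervalIntegral.integral_sub ((by fun_prop : Continuous _).intervalIntegrable _ _)
    ((by fun_prop : Continuous _).intervalIntegrable _ _),
    intervalIntegral.integral_const_mul, intervalIntegral.integral_const_mul,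
    integral_cos_sq, integral_sin_sq]
  simp only [sin_two_pi, cos_two_pi, sin_zero, cos_zero]
  ring

theorem second_variation_sin_vertical_general
    (n : ℕ) (m v : Fin n → ℝ) (α : ℝ) (k : ℤ)
    (xbar : Fin n → ℂ)
    (x : ℝ → Fin n → ℂ)
    (hx : ∀ t i, x t i = Complex.exp (Complex.I * (k : ℂ) * (t : ℂ)) * xbar i) :
    ((∫ t in (0:ℝ)..(2 * Real.pi),
        ((∑ i, ∑ j ∈ Finset.univ.filter (fun j => i < j),
            m i * m j * ((v i - v j) * Real.cos t) ^ 2)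
          - α * ∑ i, ∑ j ∈ Finset.univ.filter (fun j => i < j),
              m i * m j / ‖x t i - x t j‖ ^ (α + 2) * ((v i - v j) * Real.sin t) ^ 2))
      = Real.pi * ((∑ i, ∑ j ∈ Finset.univ.filter (fun j => i < j),
            m i * m j * (v i - v j) ^ 2)
          - α * ∑ i, ∑ j ∈ Finset.univ.filter (fun j => i < j),
              m i * m j / ‖xbar i - xbar j‖ ^ (α + 2) * (v i - v j) ^ 2))
    ∧ ((∑ i, ∑ j ∈ Finset.univ.filter (fun j => i < j),
          m i * m j * (v i - v j) ^ 2 * (1 - α / ‖xbar i - xbar j‖ ^ (α + 2))) < 0 →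
        (∫ t in (0:ℝ)..(2 * Real.pi),
          ((∑ i, ∑ j ∈ Finset.univ.filter (fun j => i < j),
              m i * m j * ((v i - v j) * Real.cos t) ^ 2)
            - α * ∑ i, ∑ j ∈ Finset.univ.filter (fun j => i < j),
                m i * m j / ‖x t i - x t j‖ ^ (α + 2) * ((v i - v j) * Real.sin t) ^ 2)) < 0) := by
  have hdist (t : ℝ) (i j : Fin n) : ‖x t i - x t j‖ = ‖xbar i - xbar j‖ := by
    rw [hx, hx, ← mul_sub, norm_mul, show Complex.I * k * t = ((k * t : ℝ) : ℂ) * Complex.I by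
      push_cast; ring, Complex.norm_exp_ofReal_mul_I, one_mul]
  refine (and_iff_left_of_imp fun hsecond hneg => ?_).mpr ?_
  · rw [hsecond]
    refine mul_neg_of_pos_of_neg pi_pos (lt_of_eq_of_lt ?_ hneg)
    simp_rw [mul_sum, ← sum_sub_distrib]
    exact sum_congr rfl fun i _ => sum_congr rfl fun j _ => by ring
  · simp_rw [hdist, mul_pow, ← mul_assoc, ← sum_mul, ← mul_assoc α]
    exact integral_mul_cos_sq_sub_mul_sin_sq _ _

/-- For the vertical variation `φ(t) = v sin t` (with `Σ m_i v_i = 0`, `Σ m_i = 1`) along a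
planar rotating path `x(t) = e^{ikt} x̄` with constant mutual distances, the second
variation equals `π [Σ_{i<j} m_i m_j (v_i−v_j)² − α Σ_{i<j} (m_i m_j/|x̄_i−x̄_j|^{α+2})(v_i−v_j)²]`;
in particular if `Σ_{i<j} m_i m_j (v_i−v_j)²(1 − α|x̄_i−x̄_j|^{−(α+2)}) < 0` the second
variation is negative (so `x` is not a minimizer). -/
theorem second_variation_sin_vertical
    (n : ℕ) (m v : Fin n → ℝ) (α : ℝ) (k : ℤ)
    (xbar : Fin n → ℂ)
    (hm : ∀ i, 0 < m i) (hmsum : ∑ i, m i = 1) (hα : 0 < α)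
    (hv : ∑ i, m i * v i = 0)
    (hcoll : ∀ i j, i ≠ j → xbar i ≠ xbar j)
    (x : ℝ → Fin n → ℂ)
    (hx : ∀ t i, x t i = Complex.exp (Complex.I * (k : ℂ) * (t : ℂ)) * xbar i) :
    ((∫ t in (0:ℝ)..(2 * Real.pi),
        ((∑ i, ∑ j ∈ Finset.univ.filter (fun j => i < j),
            m i * m j * ((v i - v j) * Real.cos t) ^ 2)
          - α * ∑ i, ∑ j ∈ Finset.univ.filter (fun j => i < j),
              m i * m j / ‖x t i - x t j‖ ^ (α + 2) * ((v i - v j) * Real.sin t) ^ 2))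
      = Real.pi * ((∑ i, ∑ j ∈ Finset.univ.filter (fun j => i < j),
            m i * m j * (v i - v j) ^ 2)
          - α * ∑ i, ∑ j ∈ Finset.univ.filter (fun j => i < j),
              m i * m j / ‖xbar i - xbar j‖ ^ (α + 2) * (v i - v j) ^ 2))
    ∧ ((∑ i, ∑ j ∈ Finset.univ.filter (fun j => i < j),
          m i * m j * (v i - v j) ^ 2 * (1 - α / ‖xbar i - xbar j‖ ^ (α + 2))) < 0 →
        (∫ t in (0:ℝ)..(2 * Real.pi),
          ((∑ i, ∑ j ∈ Finset.univ.filter (fun j => i < j),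
              m i * m j * ((v i - v j) * Real.cos t) ^ 2)
            - α * ∑ i, ∑ j ∈ Finset.univ.filter (fun j => i < j),
                m i * m j / ‖x t i - x t j‖ ^ (α + 2) * ((v i - v j) * Real.sin t) ^ 2)) < 0) :=
  second_variation_sin_vertical_general n m v α k xbar x hx
end

section
/- Consider three bodies with m_1 = m_2, m_3 = 1 − 2m_1 (all positive), Euler collinear rotating configuration x̄ = (R, −R, 0) (in ℂ), rotating k times with angular speed ω and satisfying the minimality condition R^{α+2} = α/(2β) with β = (k+ω)²/(m_1 2^{−α} + 2 m_3). Then, for the vertical variation with v_1 = v_2 ≠ v_3, the second variation is negative if and only if (k+ω)² > m_1/2^{α+1} + 1 − 2m_1. -/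
/-!
The weight `2 m₁ m₃ (v₁ − v₃)²` is positive, so the sign is that of `1 − α R^{−(α+2)}`, which is
negative iff `R^{α+2} < α`. By the minimality relation this reads `α / (2β) < α`, i.e. `2β > 1`,
and clearing the positive denominator `m₁ 2^{−α} + 2m₃ = 2 (m₁ / 2^{α+1} + 1 − 2m₁)` of `β`
gives the stated threshold for `(k + ω)²`.
-/

open Real

lemma one_sub_mul_rpow_neg_neg_iff {R a s : ℝ} (hR : 0 < R) :
    1 - a * R ^ (-s) < 0 ↔ R ^ s < a := by
  rw [sub_neg, rpow_neg hR.le, ← div_eq_mul_inv, one_lt_div (rpow_pos_of_pos hR s)]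

lemma div_lt_self_iff_one_lt {a b : ℝ} (ha : 0 < a) (hb : 0 < b) : a / b < a ↔ 1 < b := by
  rw [div_lt_iff₀ hb, lt_mul_iff_one_lt_right ha]

lemma mul_two_rpow_neg (m x : ℝ) : m * (2 : ℝ) ^ (-x) = 2 * (m / 2 ^ (x + 1)) := by
  rw [rpow_neg zero_le_two, rpow_add two_pos, rpow_one]
  field_simp

/-- For the Euler collinear configuration `x̄ = (R, −R, 0)` with `m₁ = m₂`,
`m₃ = 1 − 2m₁`, satisfying the minimality relation `R^{α+2} = α/(2β)` with
`β = (k+ω)²/(m₁2^{−α} + 2m₃)`, the vertical second-variation quantity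
`2 m₁ m₃ (v₁−v₃)²(1 − α R^{−(α+2)})` is negative iff `(k+ω)² > m₁/2^{α+1} + 1 − 2m₁`. -/
theorem euler_vertical_variation_negativity
    (α m1 ω R v1 v3 : ℝ) (k : ℤ)
    (hα : 0 < α) (hm1 : 0 < m1) (hm1' : m1 < 1/2)
    (hR : 0 < R) (hv : v1 ≠ v3)
    (m3 : ℝ) (hm3 : m3 = 1 - 2 * m1)
    (β : ℝ) (hβ : β = ((k : ℝ) + ω) ^ 2 / (m1 * (2:ℝ) ^ (-α) + 2 * m3))
    (hmin : R ^ (α + 2) = α / (2 * β)) :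
    2 * m1 * m3 * (v1 - v3) ^ 2 * (1 - α * R ^ (-(α + 2))) < 0
      ↔ ((k : ℝ) + ω) ^ 2 > m1 / 2 ^ (α + 1) + 1 - 2 * m1 := by
  have hm3pos : 0 < m3 := by rw [hm3]; linarith
  have hweight : 0 < 2 * m1 * m3 * (v1 - v3) ^ 2 := by
    have := sub_ne_zero.mpr hv
    positivity
  have h2β : 0 < 2 * β := by
    rw [← div_pos_iff_of_pos_left hα, ← hmin]
    exact rpow_pos_of_pos hR _
  have hdenom : 0 < m1 * (2:ℝ) ^ (-α) + 2 * m3 := by positivity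
  have hsign : 2 * m1 * m3 * (v1 - v3) ^ 2 * (1 - α * R ^ (-(α + 2))) < 0
      ↔ 1 - α * R ^ (-(α + 2)) < 0 :=
    ⟨fun h => neg_of_mul_neg_right h hweight.le, mul_neg_of_pos_of_neg hweight⟩
  rw [hsign, one_sub_mul_rpow_neg_neg_iff hR, hmin, div_lt_self_iff_one_lt hα h2β, hβ,
    mul_div_assoc', one_lt_div hdenom, mul_two_rpow_neg, hm3]
  constructor <;> intro h <;> linarith
end

section
/- Let G be a symmetry group of the rotating-frame action, i.e., for every g ∈ G the identity det(τ(g)) ρ(g)^{−1} Ω ρ(g) = Ω holds, where Ω ≠ 0 is the antisymmetric matrix associated to ω ∈ ℝ³. Then the line spanned by ω is G-invariant and det(ρ(g)) · (sign of ρ(g) on ω) = det(τ(g)) for all g; i.e., ω is a rotation axis in the sense that det(τ)·det(ρ) = det(v) as one-dimensional representations, where det(v) is the character of ρ restricted to the line ℝω. Conversely, if ω is a rotation axis then det(τ(g)) ρ(g)^{−1} Ω ρ(g) = Ω for all g. -/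
/-! An orthogonal `A` transforms cross products by `Aᵀ (A a ⨯₃ A b) = det A • (a ⨯₃ b)`, because
the adjugate of `Aᵀ` is `det A • A`. Hence `A⁻¹ Ω A` is the matrix of `det A • (Aᵀ ω) ⨯₃ ·`, and as
`v ↦ v ⨯₃ ·` is injective, `t • A⁻¹ Ω A = Ω` says exactly `t det A • Aᵀ ω = ω`, i.e.
`A ω = (t det A) • ω`. The sign `c = t det A` then satisfies `det A * c = t`. -/

open Matrix

section CrossProduct

variable {R : Type*} [CommRing R]

theorem crossProduct_injective : Function.Injective (crossProduct (R := R)) := by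
  intro a b h
  have e (i j : Fin 3) := congrFun (LinearMap.congr_fun h (Pi.single i 1)) j
  funext i
  fin_cases i
  · simpa [cross_apply] using e 1 2
  · simpa [cross_apply] using e 0 2
  · simpa [cross_apply] using e 0 1

theorem crossProduct_mulVec_mulVec (M : Matrix (Fin 3) (Fin 3) R) (a b : Fin 3 → R) :
    (M *ᵥ a) ⨯₃ (M *ᵥ b) = Mᵀ.adjugate *ᵥ (a ⨯₃ b) := by
  funext i
  fin_cases i <;>
    simp [cross_apply, mulVec, adjugate_fin_three, dotProduct, Fin.sum_univ_three] <;> ring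

variable {A : Matrix (Fin 3) (Fin 3) R}

theorem transpose_mulVec_crossProduct_mulVec (hA : Aᵀ * A = 1) (a b : Fin 3 → R) :
    Aᵀ *ᵥ ((A *ᵥ a) ⨯₃ (A *ᵥ b)) = A.det • (a ⨯₃ b) := by
  have hadj : Aᵀ.adjugate = A.det • A := by
    calc Aᵀ.adjugate = Aᵀ.adjugate * Aᵀ * A := by rw [mul_assoc, hA, mul_one]
      _ = A.det • A := by rw [adjugate_mul, det_transpose, smul_mul_assoc, one_mul]
  rw [crossProduct_mulVec_mulVec, hadj, smul_mulVec, mulVec_smul, mulVec_mulVec, hA,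
    one_mulVec]

theorem det_mul_self_eq_one_of_transpose_mul_eq_one (hA : Aᵀ * A = 1) : A.det * A.det = 1 := by
  simpa [det_transpose] using congrArg det hA

theorem inv_mul_mul_mulVec_eq_det_smul_crossProduct {Ω : Matrix (Fin 3) (Fin 3) R}
    {ω : Fin 3 → R} (hΩ : ∀ x, Ω *ᵥ x = ω ⨯₃ x) (hA : Aᵀ * A = 1) (x : Fin 3 → R) :
    (A⁻¹ * Ω * A) *ᵥ x = A.det • ((Aᵀ *ᵥ ω) ⨯₃ x) := by
  have hω : A *ᵥ (Aᵀ *ᵥ ω) = ω := by rw [mulVec_mulVec, mul_eq_one_comm.1 hA, one_mulVec]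
  rw [inv_eq_left_inv hA, ← mulVec_mulVec, ← mulVec_mulVec, hΩ, ← hω,
    transpose_mulVec_crossProduct_mulVec hA, hω]

theorem smul_transpose_mulVec_eq_self_iff {s : R} (hs : s * s = 1) (hA : Aᵀ * A = 1)
    (v : Fin 3 → R) : s • (Aᵀ *ᵥ v) = v ↔ A *ᵥ v = s • v := by
  have hA' : A * Aᵀ = 1 := mul_eq_one_comm.1 hA
  constructor
  · intro h
    calc A *ᵥ v = A *ᵥ (s • (Aᵀ *ᵥ v)) := by rw [h]
      _ = s • v := by rw [mulVec_smul, mulVec_mulVec, hA', one_mulVec]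
  · intro h
    calc s • (Aᵀ *ᵥ v) = s • (Aᵀ *ᵥ (s • (A *ᵥ v))) := by rw [h, smul_smul, hs, one_smul]
      _ = v := by rw [mulVec_smul, mulVec_mulVec, hA, one_mulVec, smul_smul, hs, one_smul]

theorem smul_inv_mul_mul_eq_iff_mulVec_eq {Ω : Matrix (Fin 3) (Fin 3) R} {ω : Fin 3 → R}
    (hΩ : ∀ x, Ω *ᵥ x = ω ⨯₃ x) (hA : Aᵀ * A = 1) {t : R} (ht : t * t = 1) :
    t • (A⁻¹ * Ω * A) = Ω ↔ A *ᵥ ω = (t * A.det) • ω := by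
  have hs : (t * A.det) * (t * A.det) = 1 := by
    rw [mul_mul_mul_comm, ht, det_mul_self_eq_one_of_transpose_mul_eq_one hA, one_mul]
  rw [← smul_transpose_mulVec_eq_self_iff hs hA, ext_iff_mulVec, ← crossProduct_injective.eq_iff,
    LinearMap.ext_iff]
  refine forall_congr' fun x => ?_
  rw [smul_mulVec, inv_mul_mul_mulVec_eq_det_smul_crossProduct hΩ hA, hΩ, smul_smul, map_smul,
    LinearMap.smul_apply]

end CrossProduct

theorem rotation_axis_iff_invariance_general
    {G : Type*} [Group G]
    (ω : Fin 3 → ℝ)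
    (Ω : Matrix (Fin 3) (Fin 3) ℝ) (hΩ : ∀ x, Ω.mulVec x = crossProduct ω x)
    (ρ : G → Matrix (Fin 3) (Fin 3) ℝ)
    (hρ : ∀ g, ρ g ∈ Matrix.orthogonalGroup (Fin 3) ℝ)
    (τdet : G → ℝ) (hτ : ∀ g, τdet g = 1 ∨ τdet g = -1) :
    (∀ g, τdet g • ((ρ g)⁻¹ * Ω * ρ g) = Ω)
      ↔ (∀ g, ∃ c : ℝ, (c = 1 ∨ c = -1) ∧ (ρ g).mulVec ω = c • ω
            ∧ (ρ g).det * c = τdet g) := by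
  refine forall_congr' fun g => ?_
  have hρg : (ρ g)ᵀ * ρ g = 1 := (mem_orthogonalGroup_iff' _ _).1 (hρ g)
  have hdet := det_mul_self_eq_one_of_transpose_mul_eq_one hρg
  have hτg : τdet g * τdet g = 1 := mul_self_eq_one_iff.2 (hτ g)
  rw [smul_inv_mul_mul_eq_iff_mulVec_eq hΩ hρg hτg]
  constructor
  · intro h
    refine ⟨_, mul_self_eq_one_iff.1 ?_, h, ?_⟩
    · rw [mul_mul_mul_comm, hτg, hdet, one_mul]
    · rw [mul_left_comm, hdet, mul_one]
  · rintro ⟨c, -, hc, hdc⟩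
    rwa [← hdc, mul_comm, ← mul_assoc, hdet, one_mul]

/-- `G` is a symmetry group of the rotating-frame action, i.e.
`det(τ(g)) ρ(g)⁻¹ Ω ρ(g) = Ω` for all `g` (with `Ω ≠ 0` the antisymmetric matrix of
`ω ∈ ℝ³`), if and only if `ω` is a rotation axis: the line `ℝω` is `G`-invariant,
`ρ(g)ω = c(g)·ω` with `c(g) = ±1`, and `det(ρ(g))·c(g) = det(τ(g))` for all `g`. -/
theorem rotation_axis_iff_invariance
    {G : Type*} [Group G]
    (ω : Fin 3 → ℝ) (hω : ω ≠ 0)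
    (Ω : Matrix (Fin 3) (Fin 3) ℝ) (hΩ : ∀ x, Ω.mulVec x = crossProduct ω x)
    (ρ : G → Matrix (Fin 3) (Fin 3) ℝ)
    (hρ : ∀ g, ρ g ∈ Matrix.orthogonalGroup (Fin 3) ℝ)
    (τdet : G → ℝ) (hτ : ∀ g, τdet g = 1 ∨ τdet g = -1) :
    (∀ g, τdet g • ((ρ g)⁻¹ * Ω * ρ g) = Ω)
      ↔ (∀ g, ∃ c : ℝ, (c = 1 ∨ c = -1) ∧ (ρ g).mulVec ω = c • ω
            ∧ (ρ g).det * c = τdet g) :=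
  rotation_axis_iff_invariance_general ω Ω hΩ ρ hρ τdet hτ
end
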